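/- arXiv:2601.17175 — 5 statements merged into one kernel-verified Lean document; each statement's English description precedes it below -/
import Mathlib

section
/- Let (M_n) be a mean-zero martingale and T an extended-valued stopping time for its filtration with E[|M_T| · 1(T < ∞)] < ∞, and set L = E[M_T · 1(T < ∞)]. Then for every p > 1, |L|^{p/(p−1)} ≤ liminf_{n→∞} P(T > n) · (E[|M_n|^p · 1(T > n)])^{1/(p−1)}. -/
open MeasureTheory Filter Set Topology ENNReal

/-!
Optional stopping at the bounded time `min T n` gives `E[M_n; T > n] = -E[M_T; T ≤ n]`, and the
right-hand side tends to `-L` because `{T ≤ n}` increases to `{T < ∞}`. Hölder's inequality on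
`{T > n}` with exponents `p` and `p / (p - 1)` bounds `|E[M_n; T > n]| ^ (p / (p - 1))` by
`P(T > n) · E[|M_n| ^ p; T > n] ^ (1 / (p - 1))`, and the bound passes to the liminf.
-/

section

variable {α : Type*} [MeasurableSpace α]

theorem ofReal_abs_integral_rpow_le (ν : Measure α) {f : α → ℝ} (hf : AEMeasurable f ν)
    {p : ℝ} (hp : 1 < p) :
    ENNReal.ofReal (|∫ x, f x ∂ν| ^ (p / (p - 1))) ≤
      ν univ * (∫⁻ x, ENNReal.ofReal (|f x| ^ p) ∂ν) ^ (1 / (p - 1)) := by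
  have hp0 : 0 < p := one_pos.trans hp
  have hp1 : p - 1 ≠ 0 := (sub_pos.2 hp).ne'
  have hpq : p.HolderConjugate (p / (p - 1)) := Real.HolderConjugate.conjExponent hp
  have hq0 : 0 < p / (p - 1) := hpq.symm.pos
  have holder : ∫⁻ x, ‖f x‖ₑ ∂ν ≤
      (∫⁻ x, ‖f x‖ₑ ^ p ∂ν) ^ (1 / p) * ν univ ^ (1 / (p / (p - 1))) := by
    simpa using ENNReal.lintegral_mul_le_Lp_mul_Lq ν hpq hf.enorm
      (aemeasurable_const (b := (1 : ℝ≥0∞)))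
  have hpow : ∀ x, ENNReal.ofReal (|f x| ^ p) = ‖f x‖ₑ ^ p := fun x => by
    rw [Real.enorm_eq_ofReal_abs, ENNReal.ofReal_rpow_of_nonneg (abs_nonneg _) hp0.le]
  calc ENNReal.ofReal (|∫ x, f x ∂ν| ^ (p / (p - 1)))
      = ‖∫ x, f x ∂ν‖ₑ ^ (p / (p - 1)) := by
        rw [Real.enorm_eq_ofReal_abs, ENNReal.ofReal_rpow_of_nonneg (abs_nonneg _) hq0.le]
    _ ≤ ((∫⁻ x, ‖f x‖ₑ ^ p ∂ν) ^ (1 / p) * ν univ ^ (1 / (p / (p - 1)))) ^ (p / (p - 1)) :=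
        ENNReal.rpow_le_rpow ((enorm_integral_le_lintegral_enorm f).trans holder) hq0.le
    _ = ν univ * (∫⁻ x, ENNReal.ofReal (|f x| ^ p) ∂ν) ^ (1 / (p - 1)) := by
        have h1 : 1 / p * (p / (p - 1)) = 1 / (p - 1) := by field_simp
        have h2 : 1 / (p / (p - 1)) * (p / (p - 1)) = 1 := by field_simp
        rw [ENNReal.mul_rpow_of_nonneg _ _ hq0.le, ← ENNReal.rpow_mul, ← ENNReal.rpow_mul, h1, h2,
          ENNReal.rpow_one, mul_comm]
        simp only [hpow]

end

namespace MeasureTheory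

variable {Ω : Type*} {m0 : MeasurableSpace Ω} {μ : Measure Ω}

theorem iUnion_setOf_le_natCast (T : Ω → ℕ∞) :
    ⋃ n : ℕ, {ω | T ω ≤ n} = {ω | T ω < ⊤} := by
  ext ω
  simp only [mem_iUnion, mem_ofPred_eq]
  exact ⟨fun ⟨n, hn⟩ => hn.trans_lt (ENat.natCast_lt_top n),
    fun h => ⟨(T ω).toNat, (ENat.natCast_toNat h.ne).ge⟩⟩

theorem tendsto_setIntegral_setOf_le_natCast {E : Type*} [NormedAddCommGroup E] [NormedSpace ℝ E]
    {T : Ω → ℕ∞} (hT : ∀ n : ℕ, MeasurableSet {ω | T ω ≤ n}) {f : Ω → E}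
    (hf : IntegrableOn f {ω | T ω < ⊤} μ) :
    Tendsto (fun n : ℕ => ∫ ω in {ω | T ω ≤ n}, f ω ∂μ) atTop
      (𝓝 (∫ ω in {ω | T ω < ⊤}, f ω ∂μ)) := by
  rw [← iUnion_setOf_le_natCast T] at hf ⊢
  exact tendsto_setIntegral_of_monotone hT
    (fun m n hmn ω (h : T ω ≤ m) => h.trans (by exact_mod_cast hmn)) hf

-- `stoppedValue` takes this `min` in `WithTop ℕ`, whose order instances are not reducibly those
-- of `ℕ∞`, so `min_eq_left` has to be instantiated at `WithTop ℕ` explicitly.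
theorem stoppedValue_min_natCast_of_le {β : Type*} (M : ℕ → Ω → β) {T : Ω → ℕ∞} {n : ℕ} {ω : Ω}
    (h : T ω ≤ n) : stoppedValue M (fun ω => min (T ω) n) ω = M (T ω).toNat ω := by
  rw [stoppedValue, @min_eq_left (WithTop ℕ) _ (T ω) n h]
  lift T ω to ℕ using (h.trans_lt (ENat.natCast_lt_top n)).ne with t
  rfl

theorem stoppedValue_min_natCast_of_lt {β : Type*} (M : ℕ → Ω → β) {T : Ω → ℕ∞} {n : ℕ} {ω : Ω}
    (h : n < T ω) : stoppedValue M (fun ω => min (T ω) n) ω = M n ω := by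
  rw [stoppedValue, @min_eq_right (WithTop ℕ) _ (T ω) n h.le]
  rfl

theorem Martingale.setIntegral_le_add_setIntegral_lt_eq [IsFiniteMeasure μ]
    {𝓕 : Filtration ℕ m0} {M : ℕ → Ω → ℝ} (hM : Martingale M 𝓕 μ) {T : Ω → ℕ∞}
    (hT : IsStoppingTime 𝓕 T) (n : ℕ) :
    ∫ ω in {ω | T ω ≤ n}, M (T ω).toNat ω ∂μ + ∫ ω in {ω | (n : ℕ∞) < T ω}, M n ω ∂μ =
      ∫ ω, M n ω ∂μ := by
  have hτ := hT.min_const n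
  have hτ_le : ∀ ω, min (T ω) n ≤ n := fun ω => min_le_right _ _
  have hs : MeasurableSet {ω | T ω ≤ n} := 𝓕.le n _ (hT n)
  have hcompl : {ω | T ω ≤ n}ᶜ = {ω | (n : ℕ∞) < T ω} := by
    ext ω; simp [not_le]
  calc _ = ∫ ω in {ω | T ω ≤ n}, stoppedValue M (fun ω => min (T ω) n) ω ∂μ +
        ∫ ω in {ω | T ω ≤ n}ᶜ, stoppedValue M (fun ω => min (T ω) n) ω ∂μ := by
        rw [hcompl]
        congr 1
        · exact setIntegral_congr_fun hs fun ω h => (stoppedValue_min_natCast_of_le M h).symm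
        · exact setIntegral_congr_fun (hcompl ▸ hs.compl)
            fun ω h => (stoppedValue_min_natCast_of_lt M h).symm
    _ = ∫ ω, stoppedValue M (fun ω => min (T ω) n) ω ∂μ :=
        integral_add_compl hs (hM.submartingale.integrable_stoppedValue hτ hτ_le)
    _ = ∫ ω, M n ω ∂μ :=
        (integral_congr_ae (hM.stoppedValue_ae_eq_condExp_of_le_const hτ hτ_le)).trans
          (integral_condExp _)

end MeasureTheory

/-- (Corollary 3.2.) With `L = E[M_T · 1(T < ∞)]`, for every `p > 1`,
`|L|^(p/(p-1)) ≤ liminf_n P(T > n) · (E[|M_n|^p · 1(T > n)])^(1/(p-1))`. -/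
theorem stopped_martingale_holder_liminf
    {Ω : Type*} {m0 : MeasurableSpace Ω} {μ : Measure Ω} [IsProbabilityMeasure μ]
    (𝓕 : Filtration ℕ m0) (M : ℕ → Ω → ℝ)
    (hM : Martingale M 𝓕 μ)
    (hmean : ∀ n, ∫ ω, M n ω ∂μ = 0)
    (T : Ω → ℕ∞)
    (hT : ∀ n : ℕ, MeasurableSet[𝓕 n] {ω | T ω ≤ (n : ℕ∞)})
    (hInt : Integrable ({ω | T ω < ⊤}.indicator (fun ω => M (T ω).toNat ω)) μ)
    (L : ℝ)
    (hL : L = ∫ ω, ({ω | T ω < ⊤}.indicator (fun ω => M (T ω).toNat ω)) ω ∂μ)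
    (p : ℝ) (hp : 1 < p) :
    ENNReal.ofReal (|L| ^ (p / (p - 1))) ≤
      Filter.liminf
        (fun n : ℕ =>
          μ {ω | (n : ℕ∞) < T ω} *
            (∫⁻ ω in {ω | (n : ℕ∞) < T ω}, ENNReal.ofReal (|M n ω| ^ p) ∂μ) ^ (1 / (p - 1)))
        atTop := by
  have hTmeas : ∀ n : ℕ, MeasurableSet {ω | T ω ≤ n} := fun n => 𝓕.le n _ (hT n)
  have hfinite : MeasurableSet {ω | T ω < ⊤} :=
    iUnion_setOf_le_natCast T ▸ MeasurableSet.iUnion hTmeas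
  rw [integral_indicator hfinite] at hL
  rw [integrable_indicator_iff hfinite] at hInt
  set b : ℕ → ℝ := fun n => ∫ ω in {ω | (n : ℕ∞) < T ω}, M n ω ∂μ
  have hb : Tendsto b atTop (𝓝 (-L)) := by
    have hb_eq : b = fun n : ℕ => -∫ ω in {ω | T ω ≤ n}, M (T ω).toNat ω ∂μ :=
      funext fun n => by linarith [hM.setIntegral_le_add_setIntegral_lt_eq hT n, hmean n]
    rw [hb_eq, hL]
    exact (tendsto_setIntegral_setOf_le_natCast hTmeas hInt).neg
  have hbound : ∀ n : ℕ, ENNReal.ofReal (|b n| ^ (p / (p - 1))) ≤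
      μ {ω | (n : ℕ∞) < T ω} *
        (∫⁻ ω in {ω | (n : ℕ∞) < T ω}, ENNReal.ofReal (|M n ω| ^ p) ∂μ) ^ (1 / (p - 1)) :=
    fun n => by
      simpa only [Measure.restrict_apply_univ] using
        ofReal_abs_integral_rpow_le _ (hM.integrable n).aemeasurable.restrict hp
  have hq : 0 ≤ p / (p - 1) := (div_pos (one_pos.trans hp) (sub_pos.2 hp)).le
  have hlim : Tendsto (fun n => ENNReal.ofReal (|b n| ^ (p / (p - 1)))) atTop
      (𝓝 (ENNReal.ofReal (|L| ^ (p / (p - 1))))) := by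
    simpa only [abs_neg] using ENNReal.tendsto_ofReal (hb.abs.rpow_const (Or.inr hq))
  exact hlim.liminf_eq ▸ liminf_le_liminf (Eventually.of_forall hbound)
end

section
/- Let (M_n) be a mean-zero martingale with E[M_n²] = n for every n, and let T be an extended-valued stopping time for its filtration with E[|M_T| · 1(T < ∞)] < ∞, and set L = E[M_T · 1(T < ∞)]. Then liminf_{n→∞} n · P(T > n) ≥ L². -/
open MeasureTheory Filter Set Topology ENNReal

/-!
Stopping at the bounded time `T ∧ n` and applying optional stopping gives
`E[M_T; T ≤ n] = -E[M_n; T > n]`. By Cauchy–Schwarz the right-hand side has square at most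
`E[M_n²] P(T > n) = n P(T > n)`, while the left-hand side tends to `L` by dominated convergence.
-/

theorem sq_setIntegral_le_integral_sq_mul_measureReal {α : Type*} {m : MeasurableSpace α}
    {μ : Measure α} [IsFiniteMeasure μ] {f : α → ℝ} (hf : MemLp f 2 μ) {s : Set α}
    (hs : MeasurableSet s) :
    (∫ x in s, f x ∂μ) ^ 2 ≤ (∫ x, f x ^ 2 ∂μ) * μ.real s := by
  have hone : MemLp (s.indicator fun _ ↦ (1 : ℝ)) 2 μ :=
    memLp_indicator_const 2 hs 1 (Or.inr (measure_ne_top μ s))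
  have holder := integral_mul_norm_le_Lp_mul_Lq Real.HolderConjugate.two_two
    (by simpa using hf) (by simpa using hone)
  have hnorm_f : ∫ x, ‖f x‖ ^ (2 : ℝ) ∂μ = ∫ x, f x ^ 2 ∂μ := by simp
  have hnorm_one : ∫ x, ‖s.indicator (fun _ ↦ (1 : ℝ)) x‖ ^ (2 : ℝ) ∂μ = μ.real s := by
    rw [← integral_indicator_one hs]
    congr with x
    by_cases hx : x ∈ s <;> simp [hx]
  have habs : |∫ x in s, f x ∂μ| ≤ ∫ x, ‖f x‖ * ‖s.indicator (fun _ ↦ (1 : ℝ)) x‖ ∂μ := by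
    rw [← integral_indicator hs]
    refine abs_integral_le_integral_abs.trans_eq (integral_congr_ae (.of_forall fun x ↦ ?_))
    by_cases hx : x ∈ s <;> simp [hx]
  rw [hnorm_f, hnorm_one, ← Real.sqrt_eq_rpow, ← Real.sqrt_eq_rpow] at holder
  calc (∫ x in s, f x ∂μ) ^ 2 = |∫ x in s, f x ∂μ| ^ 2 := (sq_abs _).symm
    _ ≤ (√(∫ x, f x ^ 2 ∂μ) * √(μ.real s)) ^ 2 := by gcongr; exact habs.trans holder
    _ = (∫ x, f x ^ 2 ∂μ) * μ.real s := by
      rw [mul_pow, Real.sq_sqrt (integral_nonneg fun _ ↦ sq_nonneg _),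
        Real.sq_sqrt measureReal_nonneg]

theorem ENat.iUnion_setOf_le_natCast {Ω : Type*} (T : Ω → ℕ∞) :
    ⋃ n : ℕ, {ω | T ω ≤ n} = {ω | T ω < ⊤} := by
  ext ω
  simp only [mem_iUnion, mem_ofPred_eq, lt_top_iff_ne_top]
  exact ⟨fun ⟨n, h⟩ ↦ ne_top_of_le_ne_top (ENat.natCast_ne_top n) h,
    fun h ↦ ⟨_, (ENat.natCast_toNat h).ge⟩⟩

theorem stoppedProcess_eq_indicator_add_indicator {Ω β : Type*} [AddZeroClass β]
    (u : ℕ → Ω → β) (τ : Ω → ℕ∞) (n : ℕ) :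
    stoppedProcess u τ n =
      {ω | τ ω ≤ n}.indicator (fun ω ↦ u (τ ω).toNat ω) + {ω | n < τ ω}.indicator (u n) := by
  ext ω
  rcases le_or_gt (τ ω) n with h | h
  · rw [Pi.add_apply, indicator_of_mem (s := {ω | τ ω ≤ n}) h,
      indicator_of_notMem (s := {ω | n < τ ω}) h.not_gt, add_zero, stoppedProcess_eq_of_ge h]
    obtain ⟨k, hk⟩ := ENat.ne_top_iff_exists.mp (ne_top_of_le_ne_top (ENat.natCast_ne_top n) h)
    simp [← hk]
  · rw [Pi.add_apply, indicator_of_notMem (s := {ω | τ ω ≤ n}) h.not_ge,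
      indicator_of_mem (s := {ω | n < τ ω}) h, zero_add, stoppedProcess_eq_of_le h.le]

namespace MeasureTheory.Martingale

variable {Ω E : Type*} [NormedAddCommGroup E] [NormedSpace ℝ E] [CompleteSpace E]
  {m0 : MeasurableSpace Ω} {μ : Measure Ω} [IsFiniteMeasure μ] {𝓕 : Filtration ℕ m0}
  {M : ℕ → Ω → E}

theorem integral_stoppedProcess (hM : Martingale M 𝓕 μ) {τ : Ω → WithTop ℕ}
    (hτ : IsStoppingTime 𝓕 τ) (n : ℕ) :
    ∫ ω, stoppedProcess M τ n ω ∂μ = ∫ ω, M n ω ∂μ := by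
  rw [stoppedProcess_eq_stoppedValue, integral_congr_ae
    (hM.stoppedValue_ae_eq_condExp_of_le_const ((isStoppingTime_const 𝓕 n).min hτ)
      fun ω ↦ min_le_left _ _), integral_condExp]

theorem setIntegral_setOf_le_add_setIntegral_setOf_gt (hM : Martingale M 𝓕 μ) {τ : Ω → ℕ∞}
    (hτ : IsStoppingTime 𝓕 τ) (n : ℕ) :
    ∫ ω in {ω | τ ω ≤ n}, M (τ ω).toNat ω ∂μ + ∫ ω in {ω | n < τ ω}, M n ω ∂μ =
      ∫ ω, M n ω ∂μ := by
  have hle : MeasurableSet {ω | τ ω ≤ n} := 𝓕.le n _ (hτ.measurableSet_le n)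
  have hgt : MeasurableSet {ω | n < τ ω} := 𝓕.le n _ (hτ.measurableSet_gt n)
  have hsplit := stoppedProcess_eq_indicator_add_indicator M τ n
  have hint_gt : Integrable ({ω | n < τ ω}.indicator (M n)) μ := (hM.integrable n).indicator hgt
  have hint_le : Integrable ({ω | τ ω ≤ n}.indicator fun ω ↦ M (τ ω).toNat ω) μ := by
    rw [← add_sub_cancel_right ({ω | τ ω ≤ n}.indicator fun ω ↦ M (τ ω).toNat ω)
      ({ω | n < τ ω}.indicator (M n)), ← hsplit]
    exact (integrable_stoppedProcess hτ hM.integrable n).sub hint_gt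
  rw [← integral_indicator hle, ← integral_indicator hgt, ← integral_add hint_le hint_gt,
    ← hM.integral_stoppedProcess hτ n, hsplit]
  rfl

end MeasureTheory.Martingale

theorem ENNReal.ofReal_le_liminf_of_tendsto {α : Type*} {l : Filter α} [l.NeBot] {a : α → ℝ}
    {x : ℝ} {b : α → ℝ≥0∞} (ha : Tendsto a l (𝓝 x)) (hab : ∀ᶠ i in l, ENNReal.ofReal (a i) ≤ b i) :
    ENNReal.ofReal x ≤ liminf b l :=
  (((ENNReal.continuous_ofReal.tendsto x).comp ha).liminf_eq).symm.trans_le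
    (liminf_le_liminf hab)

/-- (Corollary 3.3.) If `(M n)` is a mean-zero martingale with
`E[M_n²] = n` for every `n`, and `T` is an extended-valued stopping time with
`E[|M_T| · 1(T < ∞)] < ∞`, then with `L = E[M_T · 1(T < ∞)]` we have
`liminf_n n · P(T > n) ≥ L²`. -/
theorem stopped_martingale_tail_liminf
    {Ω : Type*} {m0 : MeasurableSpace Ω} {μ : Measure Ω} [IsProbabilityMeasure μ]
    (𝓕 : Filtration ℕ m0) (M : ℕ → Ω → ℝ)
    (hM : Martingale M 𝓕 μ)
    (hmean : ∀ n, ∫ ω, M n ω ∂μ = 0)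
    (hvar : ∀ n : ℕ, ∫ ω, (M n ω) ^ 2 ∂μ = (n : ℝ))
    (T : Ω → ℕ∞)
    (hT : ∀ n : ℕ, MeasurableSet[𝓕 n] {ω | T ω ≤ (n : ℕ∞)})
    (hInt : Integrable ({ω | T ω < ⊤}.indicator (fun ω => M (T ω).toNat ω)) μ)
    (L : ℝ)
    (hL : L = ∫ ω, ({ω | T ω < ⊤}.indicator (fun ω => M (T ω).toNat ω)) ω ∂μ) :
    ENNReal.ofReal (L ^ 2) ≤
      Filter.liminf (fun n : ℕ => (n : ℝ≥0∞) * μ {ω | (n : ℕ∞) < T ω}) atTop := by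
  have hτ : IsStoppingTime 𝓕 T := hT
  have hle : ∀ n : ℕ, MeasurableSet {ω | T ω ≤ n} := fun n ↦ 𝓕.le n _ (hT n)
  have hfin : MeasurableSet {ω | T ω < ⊤} :=
    ENat.iUnion_setOf_le_natCast T ▸ MeasurableSet.iUnion hle
  have hlim : Tendsto (fun n : ℕ ↦ ∫ ω in {ω | T ω ≤ n}, M (T ω).toNat ω ∂μ) atTop (𝓝 L) := by
    rw [hL, integral_indicator hfin, ← ENat.iUnion_setOf_le_natCast]
    refine tendsto_setIntegral_of_monotone hle
      (fun i j hij ω (hω : T ω ≤ i) ↦ (hω.trans (mod_cast hij) : T ω ≤ j)) ?_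
    rwa [ENat.iUnion_setOf_le_natCast, ← integrable_indicator_iff hfin]
  refine ENNReal.ofReal_le_liminf_of_tendsto (hlim.pow 2) ?_
  filter_upwards [eventually_ge_atTop 1] with n hn
  -- a non-integrable function has Bochner integral `0`, so `∫ M_n² = n ≠ 0` forces `M_n ∈ L²`
  have hsq : MemLp (M n) 2 μ := (memLp_two_iff_integrable_sq (hM.integrable n).1).mpr
    (.of_integral_ne_zero (by rw [hvar n]; exact Nat.cast_ne_zero.mpr (by omega)))
  have hsplit := hM.setIntegral_setOf_le_add_setIntegral_setOf_gt hτ n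
  rw [hmean n] at hsplit
  calc ENNReal.ofReal ((∫ ω in {ω | T ω ≤ n}, M (T ω).toNat ω ∂μ) ^ 2)
      = ENNReal.ofReal ((∫ ω in {ω | n < T ω}, M n ω ∂μ) ^ 2) := by
        rw [eq_neg_of_add_eq_zero_left hsplit, neg_sq]
    _ ≤ ENNReal.ofReal (n * μ.real {ω | n < T ω}) := by
        gcongr
        simpa [hvar n] using sq_setIntegral_le_integral_sq_mul_measureReal hsq
          (s := {ω | n < T ω}) (𝓕.le n _ (hτ.measurableSet_gt n))
    _ = n * μ {ω | n < T ω} := by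
        rw [ENNReal.ofReal_mul (Nat.cast_nonneg n), ENNReal.ofReal_natCast, ofReal_measureReal]
end

section
/- Let (M_n) be a mean-zero martingale satisfying: (i) lim_{ε↓0} limsup_{k→∞} P(sup_{n≥k} |M_n − M_k| > ε) = 1; and (ii) there exists B < ∞ such that for every n ≥ 1 with P(T = n) > 0, E[M_n · 1(T = n)] ≤ B · P(T = n), where T = inf{n ≥ 1 : M_n > 0} (T = ∞ if no such n exists). Then P(T < ∞) = 1 and E[M_T] ≤ B. -/
/-!
Stop `M` at its first positive time `T`. For `n ≥ 1` the stopped process is `≤ 0` on `{n < T}`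
and equals the overshoot `M_T > 0` on `{T ≤ n}`, so its positive part is dominated by
`M_0⁺ + M_T 1{T < ∞}`, which is integrable because (ii), summed over the level sets `{T = n}`,
bounds `E[M_T; T < ∞]`. A submartingale with bounded `E[X_n⁺]` is bounded in L¹
(`E|X_n| ≤ 2 E[X_n⁺] - E[X_0]`), hence converges almost surely; on `{T = ∞}` the stopped process
is `M` itself, and (i) says that `M` cannot settle down on a set of positive probability.
So `P(T = ∞) = 0`, and the same summation gives `E[M_T] ≤ B`.
-/

open MeasureTheory Filter Set Topology ENNReal Function

namespace MeasureTheory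

variable {Ω : Type*} {m0 : MeasurableSpace Ω} {μ : Measure Ω}

section StoppedValue

variable {ι β : Type*} [Nonempty ι] {ω : Ω}

lemma stoppedValue_of_eq {u : ι → Ω → β} {τ : Ω → WithTop ι} {i : ι} (h : τ ω = i) :
    stoppedValue u τ ω = u i ω := by
  simp [stoppedValue, h]

lemma stoppedValue_eq_toNat {u : ℕ → Ω → β} {τ : Ω → ℕ∞} (h : τ ω ≠ ⊤) :
    stoppedValue u τ ω = u (τ ω).toNat ω := by
  obtain ⟨j, hj⟩ := ENat.ne_top_iff_exists.1 h
  rw [stoppedValue_of_eq hj.symm, ← hj, ENat.toNat_natCast]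

lemma stoppedProcess_of_eq_top [LinearOrder ι] {u : ι → Ω → β} {τ : Ω → WithTop ι}
    (h : τ ω = ⊤) (i : ι) : stoppedProcess u τ i ω = u i ω :=
  stoppedProcess_eq_of_le (h ▸ le_top)

end StoppedValue

lemma eventually_forall_ge_abs_sub_le_of_tendsto {x : ℕ → ℝ} {c ε : ℝ}
    (hx : Tendsto x atTop (𝓝 c)) (hε : 0 < ε) :
    ∀ᶠ k in atTop, ∀ n, k ≤ n → |x n - x k| ≤ ε := by
  obtain ⟨N, hN⟩ := Metric.cauchySeq_iff.1 hx.cauchySeq ε hε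
  filter_upwards [eventually_ge_atTop N] with k hk n hn
  exact (hN n (hk.trans hn) k hk).le

section Oscillation

variable {X : ℕ → Ω → ℝ} {s : Set Ω}

lemma limsup_measure_oscillation_le_measure_compl [IsFiniteMeasure μ]
    (hX : ∀ n, Measurable (X n)) (hs : MeasurableSet s)
    (hconv : ∀ᵐ ω ∂μ, ω ∈ s → ∃ c, Tendsto (X · ω) atTop (𝓝 c)) {ε : ℝ} (hε : 0 < ε) :
    limsup (fun k => μ {ω | ∃ n, k ≤ n ∧ ε < |X n ω - X k ω|}) atTop ≤ μ sᶜ := by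
  set C : ℕ → Set Ω := fun k => {ω | ∃ n, k ≤ n ∧ ε < |X n ω - X k ω|}
  have hC : ∀ k, MeasurableSet (C k) := fun k => by
    simp only [C, ofPred_exists, ofPred_and]
    exact .iUnion fun n => .inter (.const _) (measurableSet_lt measurable_const (by fun_prop))
  have hCs : Tendsto (fun k => μ (C k ∩ s)) atTop (𝓝 (μ ∅)) := by
    refine tendsto_measure_of_ae_tendsto_indicator_of_isFiniteMeasure atTop .empty
      (fun k => (hC k).inter hs) ?_
    filter_upwards [hconv] with ω hω
    by_cases hωs : ω ∈ s
    · obtain ⟨c, hc⟩ := hω hωs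
      filter_upwards [eventually_forall_ge_abs_sub_le_of_tendsto hc hε] with k hk
      simpa [C] using fun n hn h _ => (hk n hn).not_gt h
    · exact Eventually.of_forall fun k => by simp [hωs]
  calc limsup (fun k => μ (C k)) atTop
      ≤ limsup (fun k => μ (C k ∩ s) + μ sᶜ) atTop := by
        refine limsup_le_limsup (Eventually.of_forall fun k => ?_)
        exact (measure_le_inter_add_sdiff μ (C k) s).trans
          (add_le_add_right (measure_mono (sdiff_subset_compl _ _)) _)
    _ = μ sᶜ := by simpa using (hCs.add_const (μ sᶜ)).limsup_eq

lemma measure_eq_zero_of_ae_tendsto_of_wobble [IsProbabilityMeasure μ]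
    (hX : ∀ n, Measurable (X n)) (hs : MeasurableSet s)
    (hconv : ∀ᵐ ω ∂μ, ω ∈ s → ∃ c, Tendsto (X · ω) atTop (𝓝 c))
    (hwobble : Tendsto (fun ε : ℝ =>
        limsup (fun k : ℕ => μ {ω | ∃ n, k ≤ n ∧ ε < |X n ω - X k ω|}) atTop)
      (𝓝[>] 0) (𝓝 1)) :
    μ s = 0 := by
  have h1 : 1 ≤ μ sᶜ := le_of_tendsto hwobble <| eventually_nhdsWithin_of_forall
    fun ε hε => limsup_measure_oscillation_le_measure_compl hX hs hconv hε
  exact (prob_compl_eq_one_iff hs).1 (le_antisymm prob_le_one h1)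

end Oscillation

section Submartingale

variable [IsFiniteMeasure μ] {𝓕 : Filtration ℕ m0} {f : ℕ → Ω → ℝ}

lemma Submartingale.integral_abs_le (hf : Submartingale f 𝓕 μ) (n : ℕ) :
    ∫ ω, |f n ω| ∂μ ≤ 2 * ∫ ω, (f n ω)⁺ ∂μ - ∫ ω, f 0 ω ∂μ := by
  have habs : ∀ ω, |f n ω| = 2 * (f n ω)⁺ - f n ω := fun ω => by
    linarith [posPart_add_negPart (f n ω), posPart_sub_negPart (f n ω)]
  have hint := hf.integrable n
  have hint_pos : Integrable (fun ω => 2 * (f n ω)⁺) μ := hint.pos_part.const_mul 2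
  have hmono : ∫ ω, f 0 ω ∂μ ≤ ∫ ω, f n ω ∂μ := by
    simpa using hf.setIntegral_le (Nat.zero_le n) MeasurableSet.univ
  rw [integral_congr_ae (ae_of_all _ habs), integral_sub hint_pos hint, integral_const_mul]
  linarith

theorem Submartingale.exists_ae_tendsto_of_integral_posPart_le (hf : Submartingale f 𝓕 μ)
    {C : ℝ} (hC : ∀ n, ∫ ω, (f n ω)⁺ ∂μ ≤ C) :
    ∀ᵐ ω ∂μ, ∃ c, Tendsto (f · ω) atTop (𝓝 c) := by
  refine hf.exists_ae_tendsto_of_bdd (R := (2 * C - ∫ ω, f 0 ω ∂μ).toNNReal) fun n => ?_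
  rw [eLpNorm_one_eq_lintegral_enorm, ← ofReal_integral_norm_eq_lintegral_enorm (hf.integrable n)]
  refine ENNReal.ofReal_le_ofReal ?_
  simp only [Real.norm_eq_abs]
  linarith [hf.integral_abs_le n, hC n]

end Submartingale

section Partition

variable {ι : Type*} [Countable ι] [IsFiniteMeasure μ] {s : ι → Set Ω} {g : Ω → ℝ} {B : ℝ}

lemma integrableOn_iUnion_of_setIntegral_le_mul
    (hs : ∀ i, MeasurableSet (s i)) (hd : Pairwise (Disjoint on s))
    (hg : ∀ i, IntegrableOn g (s i) μ) (hg0 : ∀ i, ∀ ω ∈ s i, 0 ≤ g ω)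
    (hB : ∀ i, ∫ ω in s i, g ω ∂μ ≤ B * μ.real (s i)) :
    IntegrableOn g (⋃ i, s i) μ := by
  refine integrableOn_iUnion_of_summable_integral_norm hg ?_
  have hμ : Summable fun i => μ.real (s i) :=
    ENNReal.summable_toReal (by rw [← measure_iUnion hd hs]; finiteness)
  refine (hμ.mul_left B).of_nonneg_of_le (fun i => integral_nonneg fun ω => norm_nonneg _)
    fun i => ?_
  rw [setIntegral_congr_fun (hs i) fun ω hω => Real.norm_of_nonneg (hg0 i ω hω)]
  exact hB i

lemma setIntegral_iUnion_le_mul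
    (hs : ∀ i, MeasurableSet (s i)) (hd : Pairwise (Disjoint on s))
    (hg : IntegrableOn g (⋃ i, s i) μ) (hB : ∀ i, ∫ ω in s i, g ω ∂μ ≤ B * μ.real (s i)) :
    ∫ ω in ⋃ i, s i, g ω ∂μ ≤ B * μ.real (⋃ i, s i) := by
  have hconst :=
    hasSum_integral_iUnion (μ := μ) (f := fun _ => B) hs hd (integrableOn_const (by finiteness))
  simp only [setIntegral_const, smul_eq_mul] at hconst
  rw [mul_comm]
  exact hasSum_le (fun i => (hB i).trans_eq (mul_comm _ _)) (hasSum_integral_iUnion hs hd hg)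
    hconst

end Partition

section LevelSets

variable {u : ℕ → Ω → ℝ} {τ : Ω → ℕ∞} {B : ℝ}

lemma iUnion_setOf_eq_natCast : ⋃ j : ℕ, {ω | τ ω = j} = {ω | τ ω < ⊤} := by
  ext ω
  simp only [mem_iUnion, mem_ofPred_eq, lt_top_iff_ne_top, ENat.ne_top_iff_exists, eq_comm]

lemma pairwise_disjoint_setOf_eq_natCast :
    Pairwise (Disjoint on fun j : ℕ => {ω | τ ω = j}) :=
  (pairwise_disjoint_fiber τ).comp_of_injective Nat.cast_injective

lemma setIntegral_stoppedValue_eq_natCast_le (hτ : ∀ j : ℕ, MeasurableSet {ω | τ ω = j})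
    (hτ1 : ∀ ω, 1 ≤ τ ω)
    (hover : ∀ n : ℕ, 1 ≤ n → 0 < μ {ω | τ ω = (n : ℕ∞)} →
      ∫ ω in {ω | τ ω = (n : ℕ∞)}, u n ω ∂μ ≤ B * (μ {ω | τ ω = (n : ℕ∞)}).toReal) (j : ℕ) :
    ∫ ω in {ω | τ ω = j}, stoppedValue u τ ω ∂μ ≤ B * μ.real {ω | τ ω = j} := by
  rcases eq_or_ne (μ {ω | τ ω = j}) 0 with h0 | h0
  · simp [Measure.restrict_eq_zero.2 h0, measureReal_def, h0]
  have hj : 1 ≤ j := by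
    by_contra! hj
    obtain rfl : j = 0 := by omega
    have hempty : {ω | τ ω = ((0 : ℕ) : ℕ∞)} = ∅ :=
      eq_empty_of_forall_notMem fun ω h => (hτ1 ω).not_gt (by simp [h.out])
    exact h0 (by rw [hempty, measure_empty])
  rw [setIntegral_congr_fun (hτ j) fun ω hω => stoppedValue_of_eq hω]
  exact hover j hj (pos_iff_ne_zero.2 h0)

variable [IsFiniteMeasure μ]

lemma integrableOn_stoppedValue_lt_top (hu : ∀ n, Integrable (u n) μ)
    (hτ : ∀ j : ℕ, MeasurableSet {ω | τ ω = j})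
    (hpos : ∀ ω, τ ω < ⊤ → 0 ≤ stoppedValue u τ ω)
    (hB : ∀ j : ℕ, ∫ ω in {ω | τ ω = j}, stoppedValue u τ ω ∂μ ≤ B * μ.real {ω | τ ω = j}) :
    IntegrableOn (stoppedValue u τ) {ω | τ ω < ⊤} μ :=
  iUnion_setOf_eq_natCast ▸ integrableOn_iUnion_of_setIntegral_le_mul hτ
    pairwise_disjoint_setOf_eq_natCast
    (fun j => (hu j).integrableOn.congr_fun (fun _ hω => (stoppedValue_of_eq hω).symm) (hτ j))
    (fun j ω hω => hpos ω (hω.out.trans_lt (WithTop.coe_lt_top j))) hB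

lemma setIntegral_stoppedValue_lt_top_le (hτ : ∀ j : ℕ, MeasurableSet {ω | τ ω = j})
    (hint : IntegrableOn (stoppedValue u τ) {ω | τ ω < ⊤} μ)
    (hB : ∀ j : ℕ, ∫ ω in {ω | τ ω = j}, stoppedValue u τ ω ∂μ ≤ B * μ.real {ω | τ ω = j}) :
    ∫ ω in {ω | τ ω < ⊤}, stoppedValue u τ ω ∂μ ≤ B * μ.real {ω | τ ω < ⊤} :=
  iUnion_setOf_eq_natCast (τ := τ) ▸ setIntegral_iUnion_le_mul hτ
    pairwise_disjoint_setOf_eq_natCast (iUnion_setOf_eq_natCast ▸ hint) hB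

end LevelSets

section FirstPositiveTime

variable {u : ℕ → Ω → ℝ} {k : ℕ} {ω : Ω}

lemma sInf_image_natCast_eq_hittingAfter {β : Type*} (u : ℕ → Ω → β) (s : Set β) (n : ℕ)
    (ω : Ω) :
    sInf ((fun k : ℕ => (k : ℕ∞)) '' {k | n ≤ k ∧ u k ω ∈ s}) = hittingAfter u s n ω := by
  classical
  rw [hittingAfter]
  split_ifs with h
  · rw [sInf_image]
    exact (ENat.natCast_sInf h).symm
  · refine sInf_eq_top.2 ?_
    rintro _ ⟨k, hk, rfl⟩
    exact absurd ⟨k, hk⟩ h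

lemma stoppedValue_hittingAfter_Ioi_pos (h : hittingAfter u (Ioi 0) k ω < ⊤) :
    0 < stoppedValue u (hittingAfter u (Ioi 0) k) ω :=
  hittingAfter_mem_set_of_ne_top h.ne

lemma posPart_stoppedProcess_hittingAfter_le (n : ℕ) (ω : Ω) :
    (stoppedProcess u (hittingAfter u (Ioi 0) 1) n ω)⁺ ≤
      (u 0 ω)⁺ + {ω | hittingAfter u (Ioi 0) 1 ω < ⊤}.indicator
        (stoppedValue u (hittingAfter u (Ioi 0) 1)) ω := by
  have hval : 0 ≤ {ω | hittingAfter u (Ioi 0) 1 ω < ⊤}.indicator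
      (stoppedValue u (hittingAfter u (Ioi 0) 1)) ω :=
    indicator_nonneg (fun _ h => (stoppedValue_hittingAfter_Ioi_pos h).le) ω
  rcases le_or_gt (hittingAfter u (Ioi 0) 1 ω) (n : WithTop ℕ) with hτn | hnτ
  · have hfin : ω ∈ {ω | hittingAfter u (Ioi 0) 1 ω < ⊤} :=
      hτn.trans_lt (WithTop.coe_lt_top n)
    have hpos : 0 < u (hittingAfter u (Ioi 0) 1 ω).untopA ω :=
      stoppedValue_hittingAfter_Ioi_pos hfin
    rw [stoppedProcess_eq_of_ge (i := n) hτn, indicator_of_mem hfin, posPart_eq_self.2 hpos.le]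
    exact le_add_of_nonneg_left (posPart_nonneg _)
  · rw [stoppedProcess_eq_of_le (i := n) hnτ.le]
    rcases Nat.eq_zero_or_pos n with rfl | hn
    · exact le_add_of_nonneg_right hval
    · have : u n ω ≤ 0 := not_lt.1 (notMem_of_lt_hittingAfter hnτ hn)
      rw [posPart_eq_zero.2 this]
      exact add_nonneg (posPart_nonneg _) hval

lemma integral_posPart_stoppedProcess_hittingAfter_le (hu0 : Integrable (u 0) μ)
    (hval : Integrable ({ω | hittingAfter u (Ioi 0) 1 ω < ⊤}.indicator
      (stoppedValue u (hittingAfter u (Ioi 0) 1))) μ) (n : ℕ) :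
    ∫ ω, (stoppedProcess u (hittingAfter u (Ioi 0) 1) n ω)⁺ ∂μ ≤
      ∫ ω, (u 0 ω)⁺ ∂μ + ∫ ω, {ω | hittingAfter u (Ioi 0) 1 ω < ⊤}.indicator
        (stoppedValue u (hittingAfter u (Ioi 0) 1)) ω ∂μ := by
  have hu0' : Integrable (fun ω => (u 0 ω)⁺) μ := hu0.pos_part
  rw [← integral_add hu0' hval]
  exact integral_mono_of_nonneg (ae_of_all _ fun ω => posPart_nonneg _) (hu0'.add hval)
    (ae_of_all _ (posPart_stoppedProcess_hittingAfter_le n))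

end FirstPositiveTime

end MeasureTheory

theorem first_positive_time_finite_of_wobble_general
    {Ω : Type*} {m0 : MeasurableSpace Ω} {μ : Measure Ω} [IsProbabilityMeasure μ]
    (𝓕 : Filtration ℕ m0) (M : ℕ → Ω → ℝ)
    (hM : Martingale M 𝓕 μ)
    (hwobble :
      Tendsto (fun ε : ℝ =>
          Filter.limsup (fun k : ℕ => μ {ω | ∃ n, k ≤ n ∧ ε < |M n ω - M k ω|}) atTop)
        (𝓝[>] (0 : ℝ)) (𝓝 (1 : ℝ≥0∞)))
    (T : Ω → ℕ∞)
    (hTdef : ∀ ω, T ω = sInf ((fun n : ℕ => (n : ℕ∞)) '' {n : ℕ | 1 ≤ n ∧ 0 < M n ω}))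
    (B : ℝ)
    (hover : ∀ n : ℕ, 1 ≤ n → 0 < μ {ω | T ω = (n : ℕ∞)} →
      ∫ ω in {ω | T ω = (n : ℕ∞)}, M n ω ∂μ ≤ B * (μ {ω | T ω = (n : ℕ∞)}).toReal) :
    μ {ω | T ω < ⊤} = 1 ∧ ∫ ω, M (T ω).toNat ω ∂μ ≤ B := by
  obtain rfl : T = hittingAfter M (Ioi 0) 1 :=
    funext fun ω => (hTdef ω).trans (sInf_image_natCast_eq_hittingAfter M (Ioi 0) 1 ω)
  set T : Ω → ℕ∞ := hittingAfter M (Ioi 0) 1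
  have hstop : IsStoppingTime 𝓕 T :=
    hM.stronglyAdapted.adapted.isStoppingTime_hittingAfter measurableSet_Ioi
  have hlevel (j : ℕ) : MeasurableSet {ω | T ω = j} := 𝓕.le j _ (hstop.measurableSet_eq j)
  have hmeas : MeasurableSet {ω | T ω < ⊤} := iUnion_setOf_eq_natCast ▸ .iUnion hlevel
  have hB := setIntegral_stoppedValue_eq_natCast_le hlevel (fun ω => le_hittingAfter ω) hover
  have hint : IntegrableOn (stoppedValue M T) {ω | T ω < ⊤} μ :=
    integrableOn_stoppedValue_lt_top hM.integrable hlevel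
      (fun ω h => (stoppedValue_hittingAfter_Ioi_pos h).le) hB
  have hconv := (hM.submartingale.stoppedProcess hstop).exists_ae_tendsto_of_integral_posPart_le
    (integral_posPart_stoppedProcess_hittingAfter_le (hM.integrable 0)
      (hint.integrable_indicator hmeas))
  have htop : μ {ω | T ω = ⊤} = 0 :=
    measure_eq_zero_of_ae_tendsto_of_wobble
      (fun n => ((hM.stronglyAdapted n).mono (𝓕.le n)).measurable) hstop.measurableSet_eq_top
      (hconv.mono fun ω hω hT => by simpa only [stoppedProcess_of_eq_top hT] using hω) hwobble
  have hae : ∀ᵐ ω ∂μ, T ω < ⊤ := by simpa only [ae_iff, not_lt_top_iff] using htop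
  have hfin : μ {ω | T ω < ⊤} = 1 := by
    rw [← measure_univ (μ := μ)]
    exact (ae_iff_measure_eq hmeas.nullMeasurableSet).1 hae
  refine ⟨hfin, ?_⟩
  calc ∫ ω, M (T ω).toNat ω ∂μ = ∫ ω in {ω | T ω < ⊤}, stoppedValue M T ω ∂μ := by
        rw [Measure.restrict_eq_self_of_ae_mem (s := {ω | T ω < ⊤}) hae]
        exact integral_congr_ae (hae.mono fun ω hω => (stoppedValue_eq_toNat hω.ne).symm)
    _ ≤ B * μ.real {ω | T ω < ⊤} := setIntegral_stoppedValue_lt_top_le hlevel hint hB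
    _ = B := by simp [measureReal_def, hfin]

/-- (Theorem 4.1.) Let `(M n)` be a mean-zero martingale such that
(i) `lim_{ε↓0} limsup_k P(sup_{n≥k} |M_n − M_k| > ε) = 1`, and
(ii) there is `B < ∞` with `E[M_n · 1(T = n)] ≤ B · P(T = n)` whenever `P(T = n) > 0`,
where `T = inf{n ≥ 1 : M_n > 0}`.  Then `P(T < ∞) = 1` and `E[M_T] ≤ B`. -/
theorem first_positive_time_finite_of_wobble
    {Ω : Type*} {m0 : MeasurableSpace Ω} {μ : Measure Ω} [IsProbabilityMeasure μ]
    (𝓕 : Filtration ℕ m0) (M : ℕ → Ω → ℝ)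
    (hM : Martingale M 𝓕 μ)
    (hmean : ∀ n, ∫ ω, M n ω ∂μ = 0)
    (hwobble :
      Tendsto (fun ε : ℝ =>
          Filter.limsup (fun k : ℕ => μ {ω | ∃ n, k ≤ n ∧ ε < |M n ω - M k ω|}) atTop)
        (𝓝[>] (0 : ℝ)) (𝓝 (1 : ℝ≥0∞)))
    (T : Ω → ℕ∞)
    (hTdef : ∀ ω, T ω = sInf ((fun n : ℕ => (n : ℕ∞)) '' {n : ℕ | 1 ≤ n ∧ 0 < M n ω}))
    (B : ℝ)
    (hover : ∀ n : ℕ, 1 ≤ n → 0 < μ {ω | T ω = (n : ℕ∞)} →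
      ∫ ω in {ω | T ω = (n : ℕ∞)}, M n ω ∂μ ≤ B * (μ {ω | T ω = (n : ℕ∞)}).toReal) :
    μ {ω | T ω < ⊤} = 1 ∧ ∫ ω, M (T ω).toNat ω ∂μ ≤ B :=
  first_positive_time_finite_of_wobble_general 𝓕 M hM hwobble T hTdef B hover
end

section
/- Let X_1, X_2, … be independent random variables with P(X_j = (2^j − 1)/j) = 2^{−j} and P(X_j = −1/j) = 1 − 2^{−j} for each j ≥ 1 (so each X_j has mean zero), let S_n = X_1 + ⋯ + X_n, and let T = inf{n ≥ 1 : S_n > 0} (T = ∞ if no such n exists). Then P(T = ∞) > 0. -/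
open MeasureTheory ProbabilityTheory Finset

/-!
With probability at least `∏_{j ≥ 1} (1 - 2^{-j}) ≥ 1/4` every step is the small downward one,
`X_j = -1/j`, and then `S_n ≤ 0` for all `n`, so the walk never becomes positive.
-/

lemma half_le_prod_one_sub_inv_two_pow (n : ℕ) :
    1 / 2 ≤ ∏ j ∈ range n, (1 - (2 : ℝ)⁻¹ ^ (j + 2)) := by
  suffices h : 1 / 2 + 2 * (2 : ℝ)⁻¹ ^ (n + 2) ≤ ∏ j ∈ range n, (1 - (2 : ℝ)⁻¹ ^ (j + 2)) by
    linarith [show (0 : ℝ) < 2⁻¹ ^ (n + 2) by positivity]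
  induction n with
  | zero => norm_num
  | succ n ih =>
    rw [prod_range_succ]
    set x := (2 : ℝ)⁻¹ ^ (n + 2)
    have hx_nonneg : 0 ≤ x := by positivity
    have hx_le : x ≤ 1 / 4 := by
      calc x ≤ (2 : ℝ)⁻¹ ^ 2 := pow_le_pow_of_le_one (by norm_num) (by norm_num) (by omega)
        _ = 1 / 4 := by norm_num
    have hnext : (2 : ℝ)⁻¹ ^ (n + 1 + 2) = x / 2 := by simp only [x, pow_succ]; ring
    rw [hnext]
    nlinarith

lemma quarter_le_prod_one_sub_inv_two_pow (n : ℕ) :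
    1 / 4 ≤ ∏ j ∈ range n, (1 - (2 : ℝ)⁻¹ ^ (j + 1)) := by
  cases n with
  | zero => norm_num
  | succ n =>
    rw [prod_range_succ']
    linarith [half_le_prod_one_sub_inv_two_pow n]

theorem ProbabilityTheory.iIndepFun.measure_iInter_preimage_eq_iInf_prod
    {Ω β : Type*} {m0 : MeasurableSpace Ω} {mβ : MeasurableSpace β} {μ : Measure Ω}
    [IsFiniteMeasure μ] {X : ℕ → Ω → β} (hX : ∀ j, Measurable (X j)) (hindep : iIndepFun X μ)
    {s : ℕ → Set β} (hs : ∀ j, MeasurableSet (s j)) :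
    μ (⋂ j, X j ⁻¹' s j) = ⨅ n, ∏ j ∈ range n, μ (X j ⁻¹' s j) := by
  have hanti : Antitone fun n => ⋂ j ∈ range n, X j ⁻¹' s j := fun a b hab =>
    Set.biInter_subset_biInter_left (range_mono hab)
  have hmeas : ∀ n, NullMeasurableSet (⋂ j ∈ range n, X j ⁻¹' s j) μ := fun n =>
    (measurableSet_biInter _ fun j _ => hX j (hs j)).nullMeasurableSet
  calc μ (⋂ j, X j ⁻¹' s j) = μ (⋂ n, ⋂ j ∈ range n, X j ⁻¹' s j) := by
        congr 1
        ext ω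
        simp only [Set.mem_iInter, mem_range]
        exact ⟨fun h n j _ => h j, fun h j => h (j + 1) j j.lt_succ_self⟩
    _ = ⨅ n, μ (⋂ j ∈ range n, X j ⁻¹' s j) :=
        hanti.measure_iInter hmeas ⟨0, measure_ne_top μ _⟩
    _ = ⨅ n, ∏ j ∈ range n, μ (X j ⁻¹' s j) := by
        simp only [hindep.measure_inter_preimage_eq_mul _ fun j _ => hs j]

theorem heavy_jump_walk_first_positive_time_infinite_with_positive_probability_general
    {Ω : Type*} {m0 : MeasurableSpace Ω} {μ : Measure Ω} [IsProbabilityMeasure μ]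
    (X : ℕ → Ω → ℝ)
    (hmeas : ∀ j, Measurable (X j))
    (hindep : iIndepFun X μ)
    (hdown : ∀ j : ℕ, 1 ≤ j →
      μ {ω | X j ω = -(1 / (j : ℝ))} = ENNReal.ofReal (1 - (2 : ℝ)⁻¹ ^ j))
    (S : ℕ → Ω → ℝ)
    (hS : ∀ n ω, S n ω = ∑ j ∈ Finset.Icc 1 n, X j ω)
    (T : Ω → ℕ∞)
    (hTdef : ∀ ω, T ω = sInf ((fun n : ℕ => (n : ℕ∞)) '' {n : ℕ | 1 ≤ n ∧ 0 < S n ω})) :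
    0 < μ {ω | T ω = ⊤} := by
  set A := ⋂ j, X (j + 1) ⁻¹' {-(1 / ((j + 1 : ℕ) : ℝ))}
  have hA : ENNReal.ofReal (1 / 4) ≤ μ A := by
    rw [(hindep.precomp (add_left_injective 1)).measure_iInter_preimage_eq_iInf_prod
      (fun j => hmeas _) (fun _ => measurableSet_singleton _)]
    refine le_iInf fun n => ?_
    have hstep : ∀ j : ℕ, μ (X (j + 1) ⁻¹' {-(1 / ((j + 1 : ℕ) : ℝ))}) =
        ENNReal.ofReal (1 - (2 : ℝ)⁻¹ ^ (j + 1)) := fun j => hdown (j + 1) (by omega)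
    rw [prod_congr rfl fun j _ => hstep j,
      ← ENNReal.ofReal_prod_of_nonneg fun j _ => by
        linarith [pow_le_one₀ (n := j + 1) (by norm_num : (0 : ℝ) ≤ 2⁻¹) (by norm_num)]]
    exact ENNReal.ofReal_le_ofReal (quarter_le_prod_one_sub_inv_two_pow n)
  have hA_sub : A ⊆ {ω | T ω = ⊤} := by
    intro ω hω
    have hS_nonpos : ∀ n, S n ω ≤ 0 := fun n => by
      rw [hS]
      refine sum_nonpos fun j hj => ?_
      obtain ⟨k, rfl⟩ := Nat.exists_eq_add_of_le' (mem_Icc.mp hj).1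
      rw [Set.mem_iInter.mp hω k]
      exact neg_nonpos.mpr (by positivity)
    simp [hTdef ω, fun n => not_lt.mpr (hS_nonpos n)]
  exact (ENNReal.ofReal_pos.mpr (by norm_num)).trans_le (hA.trans (measure_mono hA_sub))

/-- (Counter-example 2.) Let `X_1, X_2, …` be independent with
`P(X_j = (2^j − 1)/j) = 2^{−j}` and `P(X_j = −1/j) = 1 − 2^{−j}` (mean-zero),
`S_n = X_1 + ⋯ + X_n`, and `T = inf{n ≥ 1 : S_n > 0}`.  Then `P(T = ∞) > 0`. -/
theorem heavy_jump_walk_first_positive_time_infinite_with_positive_probability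
    {Ω : Type*} {m0 : MeasurableSpace Ω} {μ : Measure Ω} [IsProbabilityMeasure μ]
    (X : ℕ → Ω → ℝ)
    (hmeas : ∀ j, Measurable (X j))
    (hindep : iIndepFun X μ)
    (hup : ∀ j : ℕ, 1 ≤ j →
      μ {ω | X j ω = ((2 : ℝ) ^ j - 1) / (j : ℝ)} = ENNReal.ofReal ((2 : ℝ)⁻¹ ^ j))
    (hdown : ∀ j : ℕ, 1 ≤ j →
      μ {ω | X j ω = -(1 / (j : ℝ))} = ENNReal.ofReal (1 - (2 : ℝ)⁻¹ ^ j))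
    (S : ℕ → Ω → ℝ)
    (hS : ∀ n ω, S n ω = ∑ j ∈ Finset.Icc 1 n, X j ω)
    (T : Ω → ℕ∞)
    (hTdef : ∀ ω, T ω = sInf ((fun n : ℕ => (n : ℕ∞)) '' {n : ℕ | 1 ≤ n ∧ 0 < S n ω})) :
    0 < μ {ω | T ω = ⊤} :=
  heavy_jump_walk_first_positive_time_infinite_with_positive_probability_general (m0 := m0) X hmeas
    hindep hdown S hS T hTdef
end

section
/- Fix a > 0 and let X_1, X_2, … be i.i.d. mean-zero random variables for which there exists 0 < c < 1 with P(X_i > y) = c·e^{−ay} for all y > 0. Let S_n = X_1 + ⋯ + X_n and, for h ≥ 0, let T_h = inf{n ≥ 1 : S_n > h} (T_h = ∞ if no such n exists). Then E[S_{T_h} · 1(T_h < ∞)] = (h + 1/a) · P(T_h < ∞). -/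
/-!
Split `{T_h < ∞}` according to the value `n + 1` of `T_h`. This event is
`{S_0, …, S_n ≤ h} ∩ {X_{n+1} > h - S_n}`, and `X_{n+1}` is independent of `(S_0, …, S_n)`.
Freezing `S_n = s ≤ h`, the memoryless tail gives `E[(X - t)⁺] = P(X > t) / a` for every
`t = h - s ≥ 0`, so `E[S_{n+1}; T_h = n + 1] = (h + 1/a) P(T_h = n + 1)`; summing over `n`
gives the identity.
-/

open MeasureTheory ProbabilityTheory Filter Set Topology ENNReal Real

/-- The positive tail of a law in the paper's class `C(3, a)`. -/
def HasExpTail (ν : Measure ℝ) (a c : ℝ) : Prop :=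
  ∀ y, 0 < y → ν (Ioi y) = ENNReal.ofReal (c * exp (-a * y))

lemma lintegral_Ioi_ofReal_exp_neg_mul {a : ℝ} (ha : 0 < a) :
    ∫⁻ s in Ioi (0 : ℝ), ENNReal.ofReal (exp (-a * s)) = ENNReal.ofReal (1 / a) := by
  rw [← ofReal_integral_eq_lintegral_ofReal
    (by simpa using (exp_neg_integrableOn_Ioi 0 ha).integrable)
    (.of_forall fun _ => (exp_pos _).le), integral_exp_mul_Ioi (neg_lt_zero.2 ha)]
  simp

lemma measurableSet_setOf_mem_and_lt_add {E : Type*} [MeasurableSpace E] {C : Set E}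
    {f : E → ℝ} (hC : MeasurableSet C) (hf : Measurable f) (h : ℝ) :
    MeasurableSet {p : E × ℝ | p.1 ∈ C ∧ h < f p.1 + p.2} :=
  (measurable_fst hC).inter (measurableSet_lt measurable_const
    (by fun_prop : Measurable fun p : E × ℝ => f p.1 + p.2))

namespace HasExpTail

variable {ν : Measure ℝ} {a c t : ℝ}

lemma measure_Ioi (hν : HasExpTail ν a c) (ht : 0 ≤ t) :
    ν (Ioi t) = ENNReal.ofReal (c * exp (-a * t)) := by
  rcases ht.lt_or_eq with ht | rfl
  · exact hν t ht
  have hunion : ⋃ n : ℕ, Ioi (1 / ((n : ℝ) + 1)) = Ioi 0 := by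
    ext x
    simp only [mem_iUnion, mem_Ioi]
    exact ⟨fun ⟨n, hn⟩ => lt_trans Nat.one_div_pos_of_nat hn, exists_nat_one_div_lt⟩
  have hmono : Monotone fun n : ℕ => Ioi (1 / ((n : ℝ) + 1)) := fun m n hmn =>
    Ioi_subset_Ioi (Nat.one_div_le_one_div hmn)
  have hlim := tendsto_measure_iUnion_atTop (μ := ν) hmono
  rw [hunion] at hlim
  refine tendsto_nhds_unique hlim ?_
  simp only [Function.comp_def, hν _ Nat.one_div_pos_of_nat]
  refine ENNReal.tendsto_ofReal (Filter.Tendsto.const_mul c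
    ((Real.continuous_exp.tendsto _).comp ?_))
  simpa using (tendsto_one_div_add_atTop_nhds_zero_nat (𝕜 := ℝ)).const_mul (-a)

lemma lintegral_ofReal_sub (hν : HasExpTail ν a c) (ha : 0 < a) (ht : 0 ≤ t) :
    ∫⁻ x, ENNReal.ofReal (x - t) ∂ν = ENNReal.ofReal (1 / a) * ν (Ioi t) := by
  have hmax : ∀ x, ENNReal.ofReal (x - t) = ENNReal.ofReal (max (x - t) 0) := by simp
  have hlevel : ∀ s ∈ Ioi (0 : ℝ), ν {x | s < max (x - t) 0}
      = ν (Ioi t) * ENNReal.ofReal (exp (-a * s)) := by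
    intro s hs
    have : {x | s < max (x - t) 0} = Ioi (t + s) := by
      ext x
      simp only [mem_ofPred_eq, mem_Ioi, lt_max_iff, not_lt.2 (le_of_lt (mem_Ioi.1 hs)), or_false]
      constructor <;> intro <;> linarith
    rw [this, hν _ (by linarith [mem_Ioi.1 hs]), hν.measure_Ioi ht, ← ENNReal.ofReal_mul'
      (exp_pos _).le, mul_assoc, ← exp_add]
    ring_nf
  simp_rw [hmax]
  rw [lintegral_eq_lintegral_meas_lt ν (f := fun x => max (x - t) 0)
    (.of_forall fun _ => le_max_right _ _) (by fun_prop),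
    setLIntegral_congr_fun measurableSet_Ioi hlevel, lintegral_const_mul _ (by fun_prop),
    lintegral_Ioi_ofReal_exp_neg_mul ha, mul_comm]

lemma setLIntegral_Ioi_add (hν : HasExpTail ν a c) (ha : 0 < a) {h s : ℝ} (hh : 0 ≤ h)
    (hs : s ≤ h) :
    ∫⁻ x in Ioi (h - s), ENNReal.ofReal (s + x) ∂ν
      = ENNReal.ofReal (h + 1 / a) * ν (Ioi (h - s)) := by
  have hsplit : ∀ x ∈ Ioi (h - s),
      ENNReal.ofReal (s + x) = ENNReal.ofReal h + ENNReal.ofReal (x - (h - s)) := by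
    intro x hx
    rw [← ENNReal.ofReal_add hh (by linarith [mem_Ioi.1 hx])]
    ring_nf
  have hsupp : (fun x => ENNReal.ofReal (x - (h - s))).support ⊆ Ioi (h - s) := fun x hx => by
    simpa [sub_pos] using hx
  rw [setLIntegral_congr_fun measurableSet_Ioi hsplit, lintegral_add_left measurable_const,
    setLIntegral_const, setLIntegral_eq_of_support_subset hsupp,
    hν.lintegral_ofReal_sub ha (by linarith), ← add_mul, ← ENNReal.ofReal_add hh (by positivity)]

variable {E : Type*} [MeasurableSpace E] {C : Set E} {f : E → ℝ} {h : ℝ}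

lemma setLIntegral_prod_add [SFinite ν] {ρ : Measure E} [SFinite ρ] (hν : HasExpTail ν a c)
    (ha : 0 < a) (hh : 0 ≤ h) (hC : MeasurableSet C) (hf : Measurable f)
    (hfC : ∀ y ∈ C, f y ≤ h) :
    ∫⁻ p in {p : E × ℝ | p.1 ∈ C ∧ h < f p.1 + p.2}, ENNReal.ofReal (f p.1 + p.2) ∂ρ.prod ν
      = ENNReal.ofReal (h + 1 / a) * ρ.prod ν {p : E × ℝ | p.1 ∈ C ∧ h < f p.1 + p.2} := by
  set D := {p : E × ℝ | p.1 ∈ C ∧ h < f p.1 + p.2}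
  have hD : MeasurableSet D := measurableSet_setOf_mem_and_lt_add hC hf h
  rw [← lintegral_indicator hD, lintegral_prod _ ((by fun_prop : Measurable fun p : E × ℝ =>
    ENNReal.ofReal (f p.1 + p.2)).indicator hD).aemeasurable, Measure.prod_apply hD,
    ← lintegral_const_mul _ (measurable_measure_prodMk_left hD)]
  refine lintegral_congr fun y => ?_
  simp_rw [← indicator_comp_right (Prod.mk y)]
  rw [lintegral_indicator (measurable_prodMk_left hD)]
  by_cases hy : y ∈ C
  · have hslice : Prod.mk y ⁻¹' D = Ioi (h - f y) := by
      ext x; simp [D, hy, sub_lt_iff_lt_add']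
    rw [hslice]
    exact hν.setLIntegral_Ioi_add ha hh (hfC y hy)
  · have hslice : Prod.mk y ⁻¹' D = ∅ := by
      ext x; simp [D, hy]
    simp [hslice]

lemma setLIntegral_add_of_indepFun {Ω : Type*} {m0 : MeasurableSpace Ω}
    {μ : Measure Ω} [IsFiniteMeasure μ] {Y : Ω → E} {W : Ω → ℝ}
    (hY : Measurable Y) (hW : Measurable W) (hind : IndepFun Y W μ)
    (hWtail : HasExpTail (μ.map W) a c) (ha : 0 < a) (hh : 0 ≤ h) (hC : MeasurableSet C)
    (hf : Measurable f) (hfC : ∀ y ∈ C, f y ≤ h) :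
    ∫⁻ ω in {ω | Y ω ∈ C ∧ h < f (Y ω) + W ω}, ENNReal.ofReal (f (Y ω) + W ω) ∂μ
      = ENNReal.ofReal (h + 1 / a) * μ {ω | Y ω ∈ C ∧ h < f (Y ω) + W ω} := by
  have hD := measurableSet_setOf_mem_and_lt_add hC hf h
  have hpair := hY.prodMk hW
  have := hWtail.setLIntegral_prod_add (ρ := μ.map Y) ha hh hC hf hfC
  rw [← hind.map_prod_eq_prod_map_map hY.aemeasurable hW.aemeasurable,
    Measure.map_apply hpair hD, setLIntegral_map hD (by fun_prop) hpair] at this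
  exact this

end HasExpTail

lemma ENat.sInf_image_natCast_eq_iff {s : Set ℕ} {n : ℕ} :
    sInf ((↑) '' s : Set ℕ∞) = n ↔ IsLeast s n := by
  rcases s.eq_empty_or_nonempty with rfl | hs
  · simp [IsLeast]
  rw [sInf_image, ← ENat.natCast_sInf hs, Nat.cast_inj]
  exact ⟨fun hn => hn ▸ ⟨Nat.sInf_mem hs, fun m hm => Nat.sInf_le hm⟩, IsLeast.csInf_eq⟩

lemma isLeast_crossing_succ_iff {u : ℕ → ℝ} {h : ℝ} (h0 : u 0 ≤ h) (n : ℕ) :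
    IsLeast {m | 1 ≤ m ∧ h < u m} (n + 1) ↔ (∀ k : Fin (n + 1), u k ≤ h) ∧ h < u (n + 1) := by
  constructor
  · rintro ⟨⟨-, hcross⟩, hleast⟩
    refine ⟨fun k => not_lt.1 fun hk => ?_, hcross⟩
    rcases Nat.eq_zero_or_pos k with hk0 | hk0
    · exact (hk0 ▸ hk).not_ge h0
    · exact (hleast ⟨hk0, hk⟩).not_gt k.isLt
  · rintro ⟨hbelow, hcross⟩
    exact ⟨⟨n.succ_pos, hcross⟩, fun m ⟨_, hm⟩ => not_lt.1 fun hmn =>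
      (hbelow ⟨m, hmn⟩).not_gt hm⟩

section StoppedValue

variable {Ω : Type*} {m0 : MeasurableSpace Ω} {μ : Measure Ω}

lemma integral_indicator_lt_top_eq_mul {T : Ω → ℕ∞} {Z : ℕ → Ω → ℝ} {K : ℝ}
    (hT : ∀ n : ℕ, MeasurableSet {ω | T ω = n}) (hZ : ∀ n, Measurable (Z n))
    (hZ_nonneg : ∀ (n : ℕ) ω, T ω = n → 0 ≤ Z n ω) (hK : 0 ≤ K)
    (hlevel : ∀ n : ℕ, ∫⁻ ω in {ω | T ω = n}, ENNReal.ofReal (Z n ω) ∂μ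
      = ENNReal.ofReal K * μ {ω | T ω = n}) :
    ∫ ω, {ω | T ω < ⊤}.indicator (fun ω => Z (T ω).toNat ω) ω ∂μ
      = K * (μ {ω | T ω < ⊤}).toReal := by
  have hA : {ω | T ω < ⊤} = ⋃ n : ℕ, {ω | T ω = n} := by
    ext ω
    simp [lt_top_iff_ne_top, ENat.ne_top_iff_exists, eq_comm]
  have hAm : MeasurableSet {ω | T ω < ⊤} := hA ▸ MeasurableSet.iUnion hT
  have hdisj : Pairwise (Function.onFun Disjoint fun n : ℕ => {ω | T ω = n}) :=
    fun m n hmn => disjoint_left.2 fun ω (hm : T ω = m) (hn : T ω = n) =>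
      hmn (by simpa [hm] using hn)
  have hZT : ∀ (n : ℕ), ∀ ω ∈ {ω | T ω = n}, Z (T ω).toNat ω = Z n ω := by
    rintro n ω (hω : T ω = n)
    simp [hω]
  have hmeas :
      AEStronglyMeasurable (fun ω => Z (T ω).toNat ω) (μ.restrict {ω | T ω < ⊤}) := by
    rw [hA, aestronglyMeasurable_iUnion_iff]
    exact fun n => (hZ n).aestronglyMeasurable.congr
      ((ae_restrict_mem (hT n)).mono fun ω hω => (hZT n ω hω).symm)
  have hnonneg : 0 ≤ᵐ[μ.restrict {ω | T ω < ⊤}] fun ω => Z (T ω).toNat ω := by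
    rw [hA]
    refine ae_restrict_of_forall_mem (MeasurableSet.iUnion hT) fun ω hω => ?_
    obtain ⟨n, hn : T ω = n⟩ := mem_iUnion.1 hω
    simpa [hn] using hZ_nonneg n ω hn
  rw [integral_indicator hAm, integral_eq_lintegral_of_nonneg_ae hnonneg hmeas, hA,
    lintegral_iUnion hT hdisj, measure_iUnion hdisj hT,
    ← ENNReal.toReal_ofReal hK, ← ENNReal.toReal_mul, ← ENNReal.tsum_mul_left]
  congr 1
  refine tsum_congr fun n => ?_
  rw [setLIntegral_congr_fun (hT n) fun ω hω => by rw [hZT n ω hω], hlevel]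

end StoppedValue

lemma ProbabilityTheory.iIndepFun.indepFun_of_measurable_natural {Ω ι β E : Type*}
    {m0 : MeasurableSpace Ω} {μ : Measure Ω} [LinearOrder ι] [NormedAddCommGroup β]
    [MeasurableSpace β] [BorelSpace β] [MeasurableSpace E] {X : ι → Ω → β}
    (hX : ∀ i, StronglyMeasurable (X i)) (hind : iIndepFun X μ) {Y : Ω → E} {i j : ι}
    (hY : Measurable[Filtration.natural X hX i] Y) (hij : i < j) : IndepFun Y (X j) μ :=
  (IndepFun_iff_Indep _ _ _).2
    (indep_of_indep_of_le_left (hind.indep_comap_natural_of_lt hX hij).symm hY.comap_le)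

section RandomWalk

variable {Ω : Type*} {m0 : MeasurableSpace Ω} {μ : Measure Ω} {X S : ℕ → Ω → ℝ} {h : ℝ}

lemma measurable_natural_partialSums (hX : ∀ i, StronglyMeasurable (X i))
    (hS : ∀ n ω, S n ω = ∑ i ∈ Finset.Icc 1 n, X i ω) (n : ℕ) :
    Measurable[Filtration.natural X hX n] fun ω (k : Fin (n + 1)) => S k ω := by
  refine @measurable_pi_lambda _ _ _ (Filtration.natural X hX n) _ _ fun k => ?_
  rw [funext (hS k)]
  refine Finset.measurable_sum _ fun i hi => ((Filtration.stronglyAdapted_natural hX i).mono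
    ((Filtration.natural X hX).mono ?_)).measurable
  have := (Finset.mem_Icc.1 hi).2
  omega

lemma partialSum_succ (hS : ∀ n ω, S n ω = ∑ i ∈ Finset.Icc 1 n, X i ω) (n : ℕ) (ω : Ω) :
    S (n + 1) ω = S n ω + X (n + 1) ω := by
  rw [hS, hS, Finset.sum_Icc_succ_top n.succ_pos]

lemma setOf_isLeast_crossing_succ (hS : ∀ n ω, S n ω = ∑ i ∈ Finset.Icc 1 n, X i ω)
    (hh : 0 ≤ h) (n : ℕ) :
    {ω | IsLeast {m | 1 ≤ m ∧ h < S m ω} (n + 1)}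
      = {ω | (fun k : Fin (n + 1) => S k ω) ∈ univ.pi (fun _ => Iic h)
          ∧ h < S n ω + X (n + 1) ω} := by
  ext ω
  have hS0 : S 0 ω ≤ h := by simpa [hS] using hh
  simp only [mem_ofPred_eq, isLeast_crossing_succ_iff (u := fun m => S m ω) hS0,
    partialSum_succ hS, mem_univ_pi, mem_Iic]

lemma measurableSet_setOf_isLeast_crossing (hmeas : ∀ i, Measurable (X i))
    (hS : ∀ n ω, S n ω = ∑ i ∈ Finset.Icc 1 n, X i ω) (hh : 0 ≤ h) (n : ℕ) :
    MeasurableSet {ω | IsLeast {m | 1 ≤ m ∧ h < S m ω} n} := by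
  cases n with
  | zero => simp [IsLeast]
  | succ n =>
    have hSmeas : ∀ k, Measurable (S k) := fun k => by rw [funext (hS k)]; fun_prop
    rw [setOf_isLeast_crossing_succ hS hh]
    exact (measurable_pi_lambda (fun ω (k : Fin (n + 1)) => S k ω) (fun k => hSmeas k)
      (MeasurableSet.univ_pi fun _ => measurableSet_Iic)).inter
      (measurableSet_lt measurable_const ((hSmeas n).add (hmeas _)))

lemma setLIntegral_isLeast_crossing [IsFiniteMeasure μ] {a c : ℝ}
    (hmeas : ∀ i, Measurable (X i)) (hindep : iIndepFun X μ)
    (htail : ∀ i, HasExpTail (μ.map (X i)) a c) (ha : 0 < a)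
    (hS : ∀ n ω, S n ω = ∑ i ∈ Finset.Icc 1 n, X i ω) (hh : 0 ≤ h) (n : ℕ) :
    ∫⁻ ω in {ω | IsLeast {m | 1 ≤ m ∧ h < S m ω} n}, ENNReal.ofReal (S n ω) ∂μ
      = ENNReal.ofReal (h + 1 / a) * μ {ω | IsLeast {m | 1 ≤ m ∧ h < S m ω} n} := by
  cases n with
  | zero => simp [IsLeast]
  | succ n =>
    have hX : ∀ i, StronglyMeasurable (X i) := fun i => (hmeas i).stronglyMeasurable
    have hY := measurable_natural_partialSums hX hS n
    simp only [setOf_isLeast_crossing_succ hS hh, partialSum_succ hS n]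
    exact (htail (n + 1)).setLIntegral_add_of_indepFun (hY.mono (Filtration.le _ n) le_rfl)
      (hmeas _) (hindep.indepFun_of_measurable_natural hX hY n.lt_succ_self) ha hh
      (MeasurableSet.univ_pi fun _ => measurableSet_Iic) (measurable_pi_apply (Fin.last n))
      fun y hy => hy _ (mem_univ _)

end RandomWalk

theorem exponential_tail_walk_overshoot_general
    {Ω : Type*} {m0 : MeasurableSpace Ω} {μ : Measure Ω} [IsProbabilityMeasure μ]
    (a : ℝ) (ha : 0 < a)
    (c : ℝ)
    (X : ℕ → Ω → ℝ)
    (hmeas : ∀ i, Measurable (X i))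
    (hindep : iIndepFun X μ)
    (htail : ∀ i : ℕ, ∀ y : ℝ, 0 < y →
      μ {ω | y < X i ω} = ENNReal.ofReal (c * Real.exp (-a * y)))
    (S : ℕ → Ω → ℝ)
    (hS : ∀ n ω, S n ω = ∑ i ∈ Finset.Icc 1 n, X i ω)
    (h : ℝ) (hh : 0 ≤ h)
    (Th : Ω → ℕ∞)
    (hThdef : ∀ ω, Th ω =
      sInf ((fun n : ℕ => (n : ℕ∞)) '' {n : ℕ | 1 ≤ n ∧ h < S n ω})) :
    ∫ ω, ({ω | Th ω < ⊤}.indicator (fun ω => S (Th ω).toNat ω)) ω ∂μ =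
      (h + 1 / a) * (μ {ω | Th ω < ⊤}).toReal := by
  have hXtail : ∀ i, HasExpTail (μ.map (X i)) a c := fun i y hy => by
    rw [Measure.map_apply (hmeas i) measurableSet_Ioi]
    exact htail i y hy
  have hlevel : ∀ n : ℕ, {ω | Th ω = n} = {ω | IsLeast {m | 1 ≤ m ∧ h < S m ω} n} :=
    fun n => by
      ext ω
      rw [mem_ofPred_eq, hThdef, ENat.sInf_image_natCast_eq_iff]
      rfl
  refine integral_indicator_lt_top_eq_mul (fun n => ?_) (fun n => ?_) (fun n ω hω => ?_)
    (by positivity) (fun n => ?_)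
  · exact hlevel n ▸ measurableSet_setOf_isLeast_crossing hmeas hS hh n
  · rw [funext (hS n)]
    fun_prop
  · exact hh.trans ((hlevel n).subset hω).1.2.le
  · rw [hlevel n]
    exact setLIntegral_isLeast_crossing hmeas hindep hXtail ha hS hh n

/-- Fix `a > 0` and let `X_1, X_2, …` be i.i.d. mean-zero random
variables with `P(X_i > y) = c·e^{−ay}` for all `y > 0`, for some `0 < c < 1`.  With
`S_n = X_1 + ⋯ + X_n` and `T_h = inf{n ≥ 1 : S_n > h}` for `h ≥ 0`, we have
`E[S_{T_h} · 1(T_h < ∞)] = (h + 1/a) · P(T_h < ∞)`. -/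
theorem exponential_tail_walk_overshoot
    {Ω : Type*} {m0 : MeasurableSpace Ω} {μ : Measure Ω} [IsProbabilityMeasure μ]
    (a : ℝ) (ha : 0 < a)
    (c : ℝ) (hc0 : 0 < c) (hc1 : c < 1)
    (X : ℕ → Ω → ℝ)
    (hmeas : ∀ i, Measurable (X i))
    (hindep : iIndepFun X μ)
    (hident : ∀ i j : ℕ, IdentDistrib (X i) (X j) μ μ)
    (hint : ∀ i, Integrable (X i) μ)
    (hmean : ∀ i, ∫ ω, X i ω ∂μ = 0)
    (htail : ∀ i : ℕ, ∀ y : ℝ, 0 < y →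
      μ {ω | y < X i ω} = ENNReal.ofReal (c * Real.exp (-a * y)))
    (S : ℕ → Ω → ℝ)
    (hS : ∀ n ω, S n ω = ∑ i ∈ Finset.Icc 1 n, X i ω)
    (h : ℝ) (hh : 0 ≤ h)
    (Th : Ω → ℕ∞)
    (hThdef : ∀ ω, Th ω =
      sInf ((fun n : ℕ => (n : ℕ∞)) '' {n : ℕ | 1 ≤ n ∧ h < S n ω})) :
    ∫ ω, ({ω | Th ω < ⊤}.indicator (fun ω => S (Th ω).toNat ω)) ω ∂μ =
      (h + 1 / a) * (μ {ω | Th ω < ⊤}).toReal :=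
  exponential_tail_walk_overshoot_general (m0 := m0) a ha c X hmeas hindep htail S hS h hh Th hThdef
end
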